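/- arXiv:2510.26429 — 2 statements merged into one kernel-verified Lean document; each statement's English description precedes it below -/
import Mathlib

section
/- Let I be an elementary inference system, M_V the V-Herbrand canonical model (domain: all terms over (F, X), predicate P true on (t₁,…,tₙ) iff P(t₁,…,tₙ) is provable in I), and M↓ the grounded canonical Herbrand model (domain: ground terms over F ∪ {c_x : x ∈ X}, predicate P true on (s₁,…,sₙ) iff P(s₁↑,…,sₙ↑) is provable in I). Then for every first-order formula F' over (F, Π, X): M_V ⊨ F' if and only if M↓ ⊨ F'. -/
inductive Tm (F V : Type) : Type where
  | var : V → Tm F V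
  | app : F → List (Tm F V) → Tm F V

namespace Tm

def subE {F F' V W : Type} (emb : F → F') (σ : V → Tm F' W) : Tm F V → Tm F' W
  | .var x => σ x
  | .app f ts => .app (emb f) (ts.attach.map (fun t => subE emb σ t.1))
decreasing_by simp_wf; have := List.sizeOf_lt_of_mem t.2; omega

def eval {F V D : Type} (fn : F → List D → D) (v : V → D) : Tm F V → D
  | .var x => v x
  | .app f ts => fn f (ts.attach.map (fun t => eval fn v t.1))
decreasing_by simp_wf; have := List.sizeOf_lt_of_mem t.2; omega

def vars {F V : Type} : Tm F V → Set V
  | .var x => {x}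
  | .app _ ts => (ts.attach.map (fun t => vars t.1)).foldr (· ∪ ·) ∅
decreasing_by simp_wf; have := List.sizeOf_lt_of_mem t.2; omega

def gr {F V : Type} : Tm F V → Tm (F ⊕ V) Empty :=
  subE Sum.inl (fun x => .app (Sum.inr x) [])

def ungr {F V : Type} : Tm (F ⊕ V) Empty → Tm F V
  | .var e => e.elim
  | .app (Sum.inl f) ts => .app f (ts.attach.map (fun t => ungr t.1))
  | .app (Sum.inr x) _ => .var x
decreasing_by simp_wf; have := List.sizeOf_lt_of_mem t.2; omega

inductive WFg {F V : Type} : Tm (F ⊕ V) Empty → Prop where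
  | inl {f : F} {ts : List (Tm (F ⊕ V) Empty)} (h : ∀ t ∈ ts, WFg t) :
      WFg (.app (Sum.inl f) ts)
  | inr {x : V} : WFg (.app (Sum.inr x) [])

end Tm

structure Atm (F P V : Type) : Type where
  pred : P
  args : List (Tm F V)

def Atm.subE {F F' P V W : Type} (emb : F → F') (σ : V → Tm F' W) (A : Atm F P V) :
    Atm F' P W :=
  ⟨A.pred, A.args.map (Tm.subE emb σ)⟩

def Atm.gr {F P V : Type} : Atm F P V → Atm (F ⊕ V) P Empty :=
  Atm.subE Sum.inl (fun x => .app (Sum.inr x) [])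

def Atm.vars {F P V : Type} (A : Atm F P V) : Set V :=
  A.args.foldr (fun t s => t.vars ∪ s) ∅

def Atm.Sat {F P V D : Type} (fn : F → List D → D) (pr : P → List D → Prop)
    (v : V → D) (A : Atm F P V) : Prop :=
  pr A.pred (A.args.map (Tm.eval fn v))

structure Rule (F P V : Type) : Type where
  prems : List (Atm F P V)
  concl : Atm F P V

inductive Prov {F F' P V W : Type} (I : Set (Rule F P V)) (emb : F → F') :
    Atm F' P W → Prop where
  | step (ρ : Rule F P V) (hρ : ρ ∈ I) (σ : V → Tm F' W)
      (ih : ∀ B ∈ ρ.prems, Prov I emb (B.subE emb σ)) :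
      Prov I emb (ρ.concl.subE emb σ)

def ModelsEIS {F P V D : Type} (fn : F → List D → D) (pr : P → List D → Prop)
    (I : Set (Rule F P V)) : Prop :=
  ∀ ρ ∈ I, ∀ v : V → D,
    (∀ B ∈ ρ.prems, B.Sat fn pr v) → ρ.concl.Sat fn pr v

def QSat {V D : Type} [DecidableEq V] :
    List (Bool × V) → ((V → D) → Prop) → (V → D) → Prop
  | [], base, v => base v
  | (true, x) :: qs, base, v => ∀ d : D, QSat qs base (Function.update v x d)
  | (false, x) :: qs, base, v => ∃ d : D, QSat qs base (Function.update v x d)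

def GT (F V : Type) : Type := {s : Tm (F ⊕ V) Empty // s.WFg}

def GT.app {F V : Type} (f : F) (ss : List (GT F V)) : GT F V :=
  ⟨.app (Sum.inl f) (ss.map Subtype.val), Tm.WFg.inl (by
    intro t ht
    rcases List.mem_map.mp ht with ⟨u, _, rfl⟩
    exact u.2)⟩

def GT.cvar {F V : Type} (x : V) : GT F V := ⟨.app (Sum.inr x) [], Tm.WFg.inr⟩

/-- Interpretation of the extended signature `F ⊕ V` on well-formed ground terms. -/
def fnE (F V : Type) : (F ⊕ V) → List (GT F V) → GT F V
  | .inl f, ss => GT.app f ss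
  | .inr x, _ => GT.cvar x

/-- Predicate interpretation of the grounded canonical model `M↓`:
a ground atom holds iff its ungrounding is provable in `I`. -/
def prE {F P V : Type} (I : Set (Rule F P V)) : P → List (GT F V) → Prop :=
  fun Pd ss => Prov I (id : F → F) (⟨Pd, ss.map (fun s => s.1.ungr)⟩ : Atm F P V)

inductive Fml (F P V : Type) : Type where
  | atom : Atm F P V → Fml F P V
  | falsum : Fml F P V
  | conj : Fml F P V → Fml F P V → Fml F P V
  | disj : Fml F P V → Fml F P V → Fml F P V
  | imp : Fml F P V → Fml F P V → Fml F P V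
  | neg : Fml F P V → Fml F P V
  | all : V → Fml F P V → Fml F P V
  | ex : V → Fml F P V → Fml F P V

def Fml.Sat {F P V D : Type} [DecidableEq V] (fn : F → List D → D)
    (pr : P → List D → Prop) : (V → D) → Fml F P V → Prop
  | v, .atom A => A.Sat fn pr v
  | _, .falsum => False
  | v, .conj φ ψ => Fml.Sat fn pr v φ ∧ Fml.Sat fn pr v ψ
  | v, .disj φ ψ => Fml.Sat fn pr v φ ∨ Fml.Sat fn pr v ψ
  | v, .imp φ ψ => Fml.Sat fn pr v φ → Fml.Sat fn pr v ψ
  | v, .neg φ => ¬ Fml.Sat fn pr v φ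
  | v, .all x φ => ∀ d : D, Fml.Sat fn pr (Function.update v x d) φ
  | v, .ex x φ => ∃ d : D, Fml.Sat fn pr (Function.update v x d) φ

def Fml.free {F P V : Type} : Fml F P V → Set V
  | .atom A => A.vars
  | .falsum => ∅
  | .conj φ ψ => φ.free ∪ ψ.free
  | .disj φ ψ => φ.free ∪ ψ.free
  | .imp φ ψ => φ.free ∪ ψ.free
  | .neg φ => φ.free
  | .all x φ => φ.free \ {x}
  | .ex x φ => φ.free \ {x}

/-!
Grounding `t ↦ t[x := c_x]` is a bijection `Tm F V ≃ GT F V` whose inverse is `↑`. It commutes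
with the function symbols of `F`, and by the definition of `M↓` it matches the predicate
interpretations, so `M_V` and `M↓` are isomorphic `(F, Π)`-structures; isomorphic structures
satisfy the same formulas under corresponding assignments.
-/

namespace Tm

variable {F V : Type}

theorem eval_app {D : Type} (fn : F → List D → D) (v : V → D) (f : F) (ts : List (Tm F V)) :
    eval fn v (.app f ts) = fn f (ts.map (eval fn v)) := by
  rw [eval]; simp only [List.map_subtype, List.unattach_attach]

theorem subE_app {F' W : Type} (emb : F → F') (σ : V → Tm F' W) (f : F) (ts : List (Tm F V)) :
    subE emb σ (.app f ts) = .app (emb f) (ts.map (subE emb σ)) := by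
  rw [subE]; simp only [List.map_subtype, List.unattach_attach]

theorem ungr_app_inl (f : F) (ts : List (Tm (F ⊕ V) Empty)) :
    ungr (.app (Sum.inl f) ts) = .app f (ts.map ungr) := by
  rw [ungr]; simp only [List.map_subtype, List.unattach_attach]

theorem gr_app (f : F) (ts : List (Tm F V)) : gr (.app f ts) = .app (Sum.inl f) (ts.map gr) :=
  subE_app _ _ f ts

theorem eval_comp {D D' : Type} {fn : F → List D → D} {fn' : F → List D' → D'} (e : D → D')
    (he : ∀ f ds, fn' f (ds.map e) = e (fn f ds)) (v : V → D) :
    ∀ t : Tm F V, eval fn' (e ∘ v) t = e (eval fn v t)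
  | .var x => by rw [eval, eval, Function.comp_apply]
  | .app f ts => by
    rw [eval_app, eval_app, ← he, List.map_map]
    exact congrArg (fn' f) (List.map_congr_left fun u _ => eval_comp e he v u)

theorem wfg_gr : ∀ t : Tm F V, (gr t).WFg
  | .var _ => by rw [gr, subE]; exact WFg.inr
  | .app f ts => by
    rw [gr_app]
    refine WFg.inl fun s hs => ?_
    obtain ⟨u, _, rfl⟩ := List.mem_map.mp hs
    exact wfg_gr u

theorem ungr_gr : ∀ t : Tm F V, (gr t).ungr = t
  | .var _ => by rw [gr, subE, ungr]
  | .app f ts => by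
    rw [gr_app, ungr_app_inl, List.map_map]
    exact congrArg (app f) ((List.map_congr_left fun u _ => ungr_gr u).trans (List.map_id ts))

theorem gr_ungr : ∀ {s : Tm (F ⊕ V) Empty}, s.WFg → gr s.ungr = s
  | _, .inl (f := f) (ts := ts) h => by
    rw [ungr_app_inl, gr_app, List.map_map]
    exact congrArg (app _)
      ((List.map_congr_left fun u hu => gr_ungr (h u hu)).trans (List.map_id ts))
  | _, .inr => by rw [ungr, gr, subE]

end Tm

theorem Atm.sat_comp {F P V D D' : Type} {fn : F → List D → D} {fn' : F → List D' → D'}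
    {pr : P → List D → Prop} {pr' : P → List D' → Prop} (e : D → D')
    (hfn : ∀ f ds, fn' f (ds.map e) = e (fn f ds)) (hpr : ∀ p ds, pr' p (ds.map e) ↔ pr p ds)
    (v : V → D) (A : Atm F P V) : A.Sat fn' pr' (e ∘ v) ↔ A.Sat fn pr v := by
  unfold Atm.Sat
  rw [← hpr, List.map_map]
  exact iff_of_eq (congrArg (pr' A.pred) (List.map_congr_left fun t _ => Tm.eval_comp e hfn v t))

theorem Fml.sat_comp_equiv {F P V D D' : Type} [DecidableEq V] {fn : F → List D → D}
    {fn' : F → List D' → D'} {pr : P → List D → Prop} {pr' : P → List D' → Prop} (e : D ≃ D')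
    (hfn : ∀ f ds, fn' f (ds.map e) = e (fn f ds)) (hpr : ∀ p ds, pr' p (ds.map e) ↔ pr p ds)
    (φ : Fml F P V) (v : V → D) : φ.Sat fn' pr' (e ∘ v) ↔ φ.Sat fn pr v := by
  induction φ generalizing v with
  | atom A => exact Atm.sat_comp e hfn hpr v A
  | falsum => exact Iff.rfl
  | conj φ ψ ihφ ihψ => exact and_congr (ihφ v) (ihψ v)
  | disj φ ψ ihφ ihψ => exact or_congr (ihφ v) (ihψ v)
  | imp φ ψ ihφ ihψ => exact imp_congr (ihφ v) (ihψ v)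
  | neg φ ih => exact not_congr (ih v)
  | all x φ ih =>
    refine e.forall_congr_right.symm.trans (forall_congr' fun d => ?_)
    rw [← Function.comp_update]
    exact ih _
  | ex x φ ih =>
    refine e.exists_congr_right.symm.trans (exists_congr fun d => ?_)
    rw [← Function.comp_update]
    exact ih _

def Tm.grEquiv {F V : Type} : Tm F V ≃ GT F V where
  toFun t := ⟨t.gr, t.wfg_gr⟩
  invFun s := s.1.ungr
  left_inv := Tm.ungr_gr
  right_inv s := Subtype.ext (Tm.gr_ungr s.2)

theorem GT.app_map_grEquiv {F V : Type} (f : F) (ts : List (Tm F V)) :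
    GT.app f (ts.map Tm.grEquiv) = Tm.grEquiv (.app f ts) :=
  Subtype.ext <| (congrArg (Tm.app (Sum.inl f)) (List.map_map ..)).trans (Tm.gr_app f ts).symm

theorem prE_map_grEquiv {F P V : Type} (I : Set (Rule F P V)) (p : P) (ts : List (Tm F V)) :
    prE I p (ts.map Tm.grEquiv) ↔ Prov I (id : F → F) (⟨p, ts⟩ : Atm F P V) := by
  unfold prE
  rw [List.map_map]
  exact iff_of_eq (congrArg (fun ts => Prov I id ⟨p, ts⟩)
    ((List.map_congr_left fun t _ => Tm.ungr_gr t).trans (List.map_id ts)))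

theorem stmt7_general {F P V : Type} [DecidableEq V] (I : Set (Rule F P V))
    (φ : Fml F P V) :
    (∀ v : V → Tm F V,
        φ.Sat Tm.app (fun Pd ts => Prov I (id : F → F) (⟨Pd, ts⟩ : Atm F P V)) v) ↔
    (∀ w : V → GT F V, φ.Sat (fun f ss => GT.app f ss) (prE I) w) := by
  rw [(Tm.grEquiv.surjective.comp_left (α := V)).forall]
  exact forall_congr' fun v =>
    (Fml.sat_comp_equiv Tm.grEquiv GT.app_map_grEquiv (prE_map_grEquiv I) φ v).symm

/-- the V-Herbrand canonical model `M_V` (domain: all terms, `P` true iff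
provable in `I`) and the grounded canonical Herbrand model `M↓` (domain: ground terms
over the extended signature, `P` true iff the ungrounded atom is provable in `I`)
satisfy exactly the same first-order sentences over `(F, Π, X)`. -/
theorem stmt7 {F P V : Type} [DecidableEq V] [Nonempty V] (I : Set (Rule F P V))
    (φ : Fml F P V) (hcl : φ.free = ∅) :
    (∀ v : V → Tm F V,
        φ.Sat Tm.app (fun Pd ts => Prov I (id : F → F) (⟨Pd, ts⟩ : Atm F P V)) v) ↔
    (∀ w : V → GT F V, φ.Sat (fun f ss => GT.app f ss) (prE I) w) :=
  stmt7_general I φ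
end

section
/- Let I be an elementary inference system and A₁,…,Aₙ atoms with variables x⃗ = x₁,…,x_k. Then the grounded canonical model M↓ satisfies (∀x⃗)(A₁ ∧ ⋯ ∧ Aₙ) if and only if M↓ satisfies the ground conjunction A₁↓ ∧ ⋯ ∧ Aₙ↓, where each Aᵢ↓ replaces every variable x by the constant c_x. -/
/-
A ground atom `A[v]` holds in `M↓` exactly when the atom obtained by ungrounding it, i.e. `A`
under the substitution `x ↦ ungr (v x)`, is provable. Grounding each variable `x` by `c_x`
corresponds to the identity substitution, so the ground conjunction says that every `Aᵢ` is
provable; since provability is stable under substitution, every instance is then provable too.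
-/

namespace Tm

theorem subE_subE {F F' F'' V W U : Type} (emb : F → F') (σ : V → Tm F' W)
    (emb' : F' → F'') (τ : W → Tm F'' U) (t : Tm F V) :
    (t.subE emb σ).subE emb' τ = t.subE (emb' ∘ emb) (fun x => (σ x).subE emb' τ) := by
  induction t using Tm.subE.induct with
  | case1 x => simp [Tm.subE]
  | case2 f ts ih =>
    simp only [Tm.subE, List.map_subtype, List.unattach_attach, List.map_map]
    exact congrArg _ (List.map_congr_left fun t ht => ih ⟨t, ht⟩)

theorem subE_id_var {F V : Type} (t : Tm F V) : t.subE id Tm.var = t := by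
  induction t using Tm.subE.induct with
  | case1 x => simp [Tm.subE]
  | case2 f ts ih =>
    simp only [Tm.subE, List.map_subtype, List.unattach_attach, id_eq]
    exact congrArg _ ((List.map_congr_left fun t ht => ih ⟨t, ht⟩).trans (List.map_id _))

theorem ungr_eval_subE_inl {F V : Type} (v : V → GT F V) (t : Tm F V) :
    (t.subE Sum.inl Tm.var).eval (fnE F V) v |>.1.ungr = t.subE id (fun x => (v x).1.ungr) := by
  induction t using Tm.subE.induct with
  | case1 x => simp [Tm.subE, Tm.eval]
  | case2 f ts ih =>
    simp only [Tm.subE, Tm.eval, List.map_subtype, List.unattach_attach, List.map_map]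
    show (GT.app f _).1.ungr = _
    simp only [GT.app, Tm.ungr, List.map_subtype, List.unattach_attach]
    erw [List.map_map, List.map_map]
    exact congrArg _ (List.map_congr_left fun t ht => ih ⟨t, ht⟩)

theorem ungr_cvar {F V : Type} (x : V) : (GT.cvar x : GT F V).1.ungr = Tm.var x := by
  simp [GT.cvar, Tm.ungr]

end Tm

namespace Atm

theorem subE_id_subE {F F' P V W U : Type} (emb : F → F') (σ : V → Tm F' W)
    (τ : W → Tm F' U) (A : Atm F P V) :
    (A.subE emb σ).subE id τ = A.subE emb (fun x => (σ x).subE id τ) := by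
  simp only [Atm.subE, List.map_map]
  exact congrArg _ (List.map_congr_left fun t _ => Tm.subE_subE emb σ id τ t)

theorem subE_id_var {F P V : Type} (A : Atm F P V) : A.subE id Tm.var = A :=
  congrArg _ ((List.map_congr_left fun t _ => Tm.subE_id_var t).trans (List.map_id _))

theorem sat_subE_inl_iff_prov {F P V : Type} (I : Set (Rule F P V)) (v : V → GT F V)
    (A : Atm F P V) :
    (A.subE Sum.inl Tm.var).Sat (fnE F V) (prE I) v ↔
      Prov I id (A.subE id (fun x => (v x).1.ungr)) := by
  have hargs : ((A.args.map (Tm.subE Sum.inl Tm.var)).map (Tm.eval (fnE F V) v)).map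
      (fun s => s.1.ungr) = A.args.map (Tm.subE id fun x => (v x).1.ungr) := by
    simp only [List.map_map]
    exact List.map_congr_left fun t _ => Tm.ungr_eval_subE_inl v t
  exact Iff.of_eq (congrArg (fun args => Prov I id ⟨A.pred, args⟩) hargs)

end Atm

theorem Prov.subE {F F' P V W U : Type} {I : Set (Rule F P V)} {emb : F → F'}
    {A : Atm F' P W} (h : Prov I emb A) (τ : W → Tm F' U) : Prov I emb (A.subE id τ) := by
  induction h with
  | step ρ hρ σ _ ih =>
    rw [Atm.subE_id_subE]
    exact Prov.step ρ hρ _ fun B hB => Atm.subE_id_subE emb σ τ B ▸ ih B hB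

/-- in the grounded canonical model, a universally quantified conjunction
of atoms holds iff the fully grounded conjunction (each variable `x` replaced by the
constant `c_x`) holds. -/
theorem stmt9 {F P V : Type} (I : Set (Rule F P V)) (As : List (Atm F P V)) :
    (∀ v : V → GT F V, ∀ A ∈ As, (A.subE Sum.inl Tm.var).Sat (fnE F V) (prE I) v) ↔
    (∀ A ∈ As,
      (A.subE Sum.inl Tm.var).Sat (fnE F V) (prE I) (fun x => GT.cvar x)) := by
  refine ⟨fun h => h _, fun h v A hA => ?_⟩
  have hA_prov : Prov I id A := by
    simpa only [Atm.sat_subE_inl_iff_prov, Tm.ungr_cvar, Atm.subE_id_var] using h A hA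
  rw [Atm.sat_subE_inl_iff_prov]
  exact hA_prov.subE _
end
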